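/- arXiv:2511.00741 — 8 statements merged into one kernel-verified Lean document; each statement's English description precedes it below -/
import Mathlib

section
/- Let S be a nonempty closed convex subset of a real Hilbert space H, c ∈ H, x₀ ∈ H, and η > 0. Suppose x* ∈ S maximizes ⟨c, x⟩ over x ∈ S, and let x^η = P_S(x₀ + η c) be the orthogonal projection of x₀ + η c onto S. Then 0 ≤ ⟨c, x*⟩ − ⟨c, x^η⟩ ≤ (‖x* − x₀‖² − ‖x^η − x₀‖²)/(2η). -/
/-!
The projection `xη` of `x₀ + η c` onto `S` satisfies the variational inequality
`⟪x₀ + η c - xη, z - xη⟫ ≤ 0` for every `z ∈ S`. Taking `z = x*` and rewriting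
`⟪xη - x₀, x* - xη⟫` by the three-point identity gives
`2η ⟪c, x* - xη⟫ + ‖x* - xη‖² ≤ ‖x* - x₀‖² - ‖xη - x₀‖²`; the lower bound is the
optimality of `x*`.
-/

open RealInnerProductSpace

section

variable {H : Type*} [NormedAddCommGroup H] [InnerProductSpace ℝ H]

theorem two_mul_real_inner_sub_sub_eq (x v w : H) :
    2 * ⟪v - x, w - v⟫ = ‖w - x‖ ^ 2 - ‖v - x‖ ^ 2 - ‖w - v‖ ^ 2 := by
  rw [show w - x = (v - x) + (w - v) by abel, norm_add_sq_real]
  ring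

theorem Convex.real_inner_sub_nonpos_of_forall_norm_sub_le {K : Set H} (hK : Convex ℝ K)
    {u v : H} (hv : v ∈ K) (hmin : ∀ z ∈ K, ‖u - v‖ ≤ ‖u - z‖) :
    ∀ w ∈ K, ⟪u - v, w - v⟫ ≤ 0 := by
  have : Nonempty K := ⟨⟨v, hv⟩⟩
  refine (norm_eq_iInf_iff_real_inner_le_zero hK hv).mp (le_antisymm ?_ ?_)
  · exact le_ciInf fun z => hmin z z.2
  · exact ciInf_le ⟨0, Set.forall_mem_range.2 fun _ => norm_nonneg _⟩ (⟨v, hv⟩ : K)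

theorem Convex.two_mul_inner_sub_add_norm_sq_le_of_forall_norm_sub_le {K : Set H}
    (hK : Convex ℝ K) {x₀ c v : H} {η : ℝ} (hv : v ∈ K)
    (hmin : ∀ z ∈ K, ‖x₀ + η • c - v‖ ≤ ‖x₀ + η • c - z‖) {w : H} (hw : w ∈ K) :
    2 * η * ⟪c, w - v⟫ + ‖w - v‖ ^ 2 ≤ ‖w - x₀‖ ^ 2 - ‖v - x₀‖ ^ 2 := by
  have hvar := hK.real_inner_sub_nonpos_of_forall_norm_sub_le hv hmin w hw
  rw [show x₀ + η • c - v = η • c - (v - x₀) by abel, inner_sub_left,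
    real_inner_smul_left] at hvar
  linarith [two_mul_real_inner_sub_sub_eq x₀ v w]

end

theorem single_projection_bounds_general
    {H : Type*} [NormedAddCommGroup H] [InnerProductSpace ℝ H]
    (S : Set H) (hconv : Convex ℝ S)
    (c x₀ : H) (η : ℝ) (hη : 0 < η)
    (xstar : H) (hxstarS : xstar ∈ S) (hxstar : ∀ z ∈ S, ⟪c, z⟫ ≤ ⟪c, xstar⟫)
    (xη : H) (hxηS : xη ∈ S)
    (hxη : ∀ z ∈ S, ‖x₀ + η • c - xη‖ ≤ ‖x₀ + η • c - z‖) :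
    0 ≤ ⟪c, xstar⟫ - ⟪c, xη⟫ ∧
      ⟪c, xstar⟫ - ⟪c, xη⟫ ≤ (‖xstar - x₀‖ ^ 2 - ‖xη - x₀‖ ^ 2) / (2 * η) := by
  refine ⟨sub_nonneg.mpr (hxstar xη hxηS), ?_⟩
  have hstep := hconv.two_mul_inner_sub_add_norm_sq_le_of_forall_norm_sub_le hxηS hxη hxstarS
  rw [← inner_sub_right, le_div_iff₀ (by positivity)]
  linarith [sq_nonneg ‖xstar - xη‖]

/-- Lemma (bounds): for `η > 0`, a maximizer `x*` of `⟪c,·⟫` over `S`, and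
`x^η = P_S(x₀ + η c)` the projection of `x₀ + η c` onto `S`, we have
`0 ≤ ⟪c,x*⟫ - ⟪c,x^η⟫ ≤ (‖x*-x₀‖² - ‖x^η-x₀‖²)/(2η)`. -/
theorem single_projection_bounds
    {H : Type*} [NormedAddCommGroup H] [InnerProductSpace ℝ H] [CompleteSpace H]
    (S : Set H) (hne : S.Nonempty) (hcl : IsClosed S) (hconv : Convex ℝ S)
    (c x₀ : H) (η : ℝ) (hη : 0 < η)
    (xstar : H) (hxstarS : xstar ∈ S) (hxstar : ∀ z ∈ S, ⟪c, z⟫ ≤ ⟪c, xstar⟫)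
    (xη : H) (hxηS : xη ∈ S)
    (hxη : ∀ z ∈ S, ‖x₀ + η • c - xη‖ ≤ ‖x₀ + η • c - z‖) :
    0 ≤ ⟪c, xstar⟫ - ⟪c, xη⟫ ∧
      ⟪c, xstar⟫ - ⟪c, xη⟫ ≤ (‖xstar - x₀‖ ^ 2 - ‖xη - x₀‖ ^ 2) / (2 * η) :=
  single_projection_bounds_general S hconv c x₀ η hη xstar hxstarS hxstar xη hxηS hxη
end

section
/- Let S be a nonempty bounded closed convex subset of a real Hilbert space H with diameter D, c ∈ H, x₀ ∈ S, and η > 0. Suppose x* ∈ S maximizes ⟨c, x⟩ over S, and let x^η = P_S(x₀ + η c). Then 0 ≤ ⟨c, x*⟩ − ⟨c, x^η⟩ ≤ D²/(2η). -/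
/-!
The variational inequality of the projection, `⟪x₀ + η • c - xη, x* - xη⟫ ≤ 0`, gives
`η ⟪c, x* - xη⟫ ≤ ⟪xη - x₀, x* - xη⟫ ≤ ‖x* - x₀‖² / 2 ≤ D² / 2`, the middle step being
`2 ⟪a, b⟫ ≤ ‖a + b‖²`.
-/

open RealInnerProductSpace

section

variable {F : Type*} [NormedAddCommGroup F] [InnerProductSpace ℝ F]

theorem real_inner_le_zero_of_isMinOn_norm_sub {K : Set F} (hK : Convex ℝ K) {u v w : F}
    (hv : v ∈ K) (hmin : IsMinOn (fun w => ‖u - w‖) K v) (hw : w ∈ K) :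
    ⟪u - v, w - v⟫ ≤ 0 :=
  (norm_eq_iInf_iff_real_inner_le_zero hK hv).1 (hmin.iInf_eq hv).symm w hw

theorem two_mul_real_inner_le_norm_add_sq (a b : F) : 2 * ⟪a, b⟫ ≤ ‖a + b‖ ^ 2 := by
  rw [norm_add_sq_real]
  nlinarith [sq_nonneg ‖a‖, sq_nonneg ‖b‖]

theorem two_mul_real_inner_sub_proj_le_norm_sub_sq {K : Set F} (hK : Convex ℝ K) (x c : F)
    (η : ℝ) {y z : F} (hy : y ∈ K) (hmin : IsMinOn (fun w => ‖x + η • c - w‖) K y)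
    (hz : z ∈ K) : 2 * η * ⟪c, z - y⟫ ≤ ‖z - x‖ ^ 2 := by
  have hvi : ⟪x + η • c - y, z - y⟫ ≤ 0 := real_inner_le_zero_of_isMinOn_norm_sub hK hy hmin hz
  have hsplit : ⟪x + η • c - y, z - y⟫ = η * ⟪c, z - y⟫ - ⟪y - x, z - y⟫ := by
    rw [show x + η • c - y = η • c - (y - x) by abel, inner_sub_left, real_inner_smul_left]
  have hcross : 2 * ⟪y - x, z - y⟫ ≤ ‖z - x‖ ^ 2 := by
    simpa only [sub_add_sub_cancel'] using two_mul_real_inner_le_norm_add_sq (y - x) (z - y)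
  linarith

end

theorem single_projection_diam_bound_general
    {H : Type*} [NormedAddCommGroup H] [InnerProductSpace ℝ H]
    (S : Set H) (hconv : Convex ℝ S)
    (hbdd : Bornology.IsBounded S)
    (c x₀ : H) (hx₀ : x₀ ∈ S) (η : ℝ) (hη : 0 < η)
    (xstar : H) (hxstarS : xstar ∈ S) (hxstar : ∀ z ∈ S, ⟪c, z⟫ ≤ ⟪c, xstar⟫)
    (xη : H) (hxηS : xη ∈ S)
    (hxη : ∀ z ∈ S, ‖x₀ + η • c - xη‖ ≤ ‖x₀ + η • c - z‖) :
    0 ≤ ⟪c, xstar⟫ - ⟪c, xη⟫ ∧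
      ⟪c, xstar⟫ - ⟪c, xη⟫ ≤ (Metric.diam S) ^ 2 / (2 * η) := by
  refine ⟨sub_nonneg.2 (hxstar xη hxηS), ?_⟩
  have hstep := two_mul_real_inner_sub_proj_le_norm_sub_sq hconv x₀ c η hxηS
    (isMinOn_iff.2 hxη) hxstarS
  have hdiam : ‖xstar - x₀‖ ≤ Metric.diam S := by
    simpa only [dist_eq_norm] using Metric.dist_le_diam_of_mem hbdd hxstarS hx₀
  rw [le_div_iff₀ (by positivity), ← inner_sub_right]
  calc ⟪c, xstar - xη⟫ * (2 * η) = 2 * η * ⟪c, xstar - xη⟫ := mul_comm _ _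
    _ ≤ ‖xstar - x₀‖ ^ 2 := hstep
    _ ≤ Metric.diam S ^ 2 := pow_le_pow_left₀ (norm_nonneg _) hdiam 2

/-- For `x₀ ∈ S` bounded, the single-projection approximation error is at most
`diam(S)² / (2η)`. -/
theorem single_projection_diam_bound
    {H : Type*} [NormedAddCommGroup H] [InnerProductSpace ℝ H] [CompleteSpace H]
    (S : Set H) (hne : S.Nonempty) (hcl : IsClosed S) (hconv : Convex ℝ S)
    (hbdd : Bornology.IsBounded S)
    (c x₀ : H) (hx₀ : x₀ ∈ S) (η : ℝ) (hη : 0 < η)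
    (xstar : H) (hxstarS : xstar ∈ S) (hxstar : ∀ z ∈ S, ⟪c, z⟫ ≤ ⟪c, xstar⟫)
    (xη : H) (hxηS : xη ∈ S)
    (hxη : ∀ z ∈ S, ‖x₀ + η • c - xη‖ ≤ ‖x₀ + η • c - z‖) :
    0 ≤ ⟪c, xstar⟫ - ⟪c, xη⟫ ∧
      ⟪c, xstar⟫ - ⟪c, xη⟫ ≤ (Metric.diam S) ^ 2 / (2 * η) :=
  single_projection_diam_bound_general S hconv hbdd c x₀ hx₀ η hη xstar hxstarS hxstar xη hxηS hxη
end

section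
/- Let S be a nonempty closed convex subset of a real Hilbert space H, c ∈ H, x₀ ∈ H. For η ∈ ℝ let x^η = P_S(x₀ + η c). If 0 < η₁ < η₂ (or more generally η₁ < η₂), then ⟨c, x^{η₁}⟩ ≤ ⟨c, x^{η₂}⟩. -/
open RealInnerProductSpace

section NearestPoint

variable {H : Type*} [NormedAddCommGroup H] [InnerProductSpace ℝ H] {S : Set H}

theorem real_inner_sub_sub_nonpos_of_forall_norm_sub_le (hS : Convex ℝ S) {u v : H} (hv : v ∈ S)
    (hmin : ∀ z ∈ S, ‖u - v‖ ≤ ‖u - z‖) {w : H} (hw : w ∈ S) : ⟪u - v, w - v⟫ ≤ 0 := by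
  have : Nonempty S := ⟨⟨v, hv⟩⟩
  have hinf : ‖u - v‖ = ⨅ z : S, ‖u - z‖ :=
    le_antisymm (le_ciInf fun z => hmin z z.2)
      (ciInf_le ⟨0, Set.forall_mem_range.2 fun _ => norm_nonneg _⟩ (⟨v, hv⟩ : S))
  exact (norm_eq_iInf_iff_real_inner_le_zero hS hv).mp hinf w hw

/-- Nearest-point maps onto convex sets are firmly nonexpansive. -/
theorem norm_sub_sq_le_inner_of_forall_norm_sub_le (hS : Convex ℝ S) {u₁ u₂ v₁ v₂ : H}
    (hv₁ : v₁ ∈ S) (hmin₁ : ∀ z ∈ S, ‖u₁ - v₁‖ ≤ ‖u₁ - z‖)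
    (hv₂ : v₂ ∈ S) (hmin₂ : ∀ z ∈ S, ‖u₂ - v₂‖ ≤ ‖u₂ - z‖) :
    ‖v₂ - v₁‖ ^ 2 ≤ ⟪u₂ - u₁, v₂ - v₁⟫ := by
  have h₁ := real_inner_sub_sub_nonpos_of_forall_norm_sub_le hS hv₁ hmin₁ hv₂
  have h₂ := real_inner_sub_sub_nonpos_of_forall_norm_sub_le hS hv₂ hmin₂ hv₁
  have hsplit : ⟪u₂ - u₁, v₂ - v₁⟫ =
      ‖v₂ - v₁‖ ^ 2 - ⟪u₁ - v₁, v₂ - v₁⟫ - ⟪u₂ - v₂, v₁ - v₂⟫ := by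
    rw [← real_inner_self_eq_norm_sq]
    simp only [inner_sub_left, inner_sub_right, real_inner_comm]
    ring
  linarith

end NearestPoint

theorem proj_objective_monotone_general
    {H : Type*} [NormedAddCommGroup H] [InnerProductSpace ℝ H]
    (S : Set H) (hconv : Convex ℝ S)
    (c x₀ : H) (η₁ η₂ : ℝ) (h : η₁ < η₂)
    (x1 : H) (hx1S : x1 ∈ S)
    (hx1 : ∀ z ∈ S, ‖x₀ + η₁ • c - x1‖ ≤ ‖x₀ + η₁ • c - z‖)
    (x2 : H) (hx2S : x2 ∈ S)
    (hx2 : ∀ z ∈ S, ‖x₀ + η₂ • c - x2‖ ≤ ‖x₀ + η₂ • c - z‖) :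
    ⟪c, x1⟫ ≤ ⟪c, x2⟫ := by
  have hfirm := norm_sub_sq_le_inner_of_forall_norm_sub_le hconv hx1S hx1 hx2S hx2
  rw [show x₀ + η₂ • c - (x₀ + η₁ • c) = (η₂ - η₁) • c by module, real_inner_smul_left] at hfirm
  have hgain : 0 ≤ ⟪c, x2 - x1⟫ :=
    nonneg_of_mul_nonneg_right ((sq_nonneg _).trans hfirm) (sub_pos.2 h)
  rw [inner_sub_right] at hgain
  linarith

/-- Monotonicity of the projected objective value in the step size:
if `η₁ < η₂` and `x^{ηᵢ} = P_S(x₀ + ηᵢ c)`, then `⟪c, x^{η₁}⟫ ≤ ⟪c, x^{η₂}⟫`. -/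
theorem proj_objective_monotone
    {H : Type*} [NormedAddCommGroup H] [InnerProductSpace ℝ H] [CompleteSpace H]
    (S : Set H) (hne : S.Nonempty) (hcl : IsClosed S) (hconv : Convex ℝ S)
    (c x₀ : H) (η₁ η₂ : ℝ) (h : η₁ < η₂)
    (x1 : H) (hx1S : x1 ∈ S)
    (hx1 : ∀ z ∈ S, ‖x₀ + η₁ • c - x1‖ ≤ ‖x₀ + η₁ • c - z‖)
    (x2 : H) (hx2S : x2 ∈ S)
    (hx2 : ∀ z ∈ S, ‖x₀ + η₂ • c - x2‖ ≤ ‖x₀ + η₂ • c - z‖) :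
    ⟪c, x1⟫ ≤ ⟪c, x2⟫ :=
  proj_objective_monotone_general S hconv c x₀ η₁ η₂ h x1 hx1S hx1 x2 hx2S hx2
end

section
/- Let S be a nonempty closed convex subset of a real Hilbert space H, c ∈ H, and x₀ ∈ H. Suppose the set M of maximizers of ⟨c, x⟩ over S is nonempty. Then as η → ∞, the projections P_S(x₀ + η c) converge in norm to P_M(x₀), the unique point of M closest to x₀. -/
/-!
The point `p_η = P_S(x₀ + η c)` minimises `‖z - x₀‖² - 2η⟪c, z⟫` over `S`, with the quadratic
growth `‖p_η - z‖²` given by the projection inequality. Comparing `p_η` with `p_η'` shows that on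
`η ≥ 0` the map `η ↦ ‖p_η - x₀‖²` is nondecreasing and dominates `‖p_η - p_η'‖²` in its increments;
comparing it with `x*` bounds it by `‖x* - x₀‖²` and forces `⟪c, p_η⟫ → max_S ⟪c, ·⟫`. Hence `p_η`
is Cauchy, its limit `y` lies in `M`, and `‖y - x₀‖² + ‖y - x*‖² ≤ ‖x* - x₀‖² ≤ ‖y - x₀‖²`
gives `y = x*`.
-/

open RealInnerProductSpace Filter Set

theorem sq_norm_sub_add_sq_norm_sub_le_of_forall_norm_sub_le
    {H : Type*} [NormedAddCommGroup H] [InnerProductSpace ℝ H] {K : Set H} (hK : Convex ℝ K)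
    {u p : H} (hp : p ∈ K) (hmin : ∀ z ∈ K, ‖u - p‖ ≤ ‖u - z‖) {z : H} (hz : z ∈ K) :
    ‖u - p‖ ^ 2 + ‖p - z‖ ^ 2 ≤ ‖u - z‖ ^ 2 := by
  have : Nonempty K := ⟨⟨p, hp⟩⟩
  have hinf : ‖u - p‖ = ⨅ w : K, ‖u - w‖ :=
    le_antisymm (le_ciInf fun w => hmin w w.2)
      (ciInf_le ⟨0, forall_mem_range.2 fun _ => norm_nonneg _⟩ (⟨p, hp⟩ : K))
  have hinner := (norm_eq_iInf_iff_real_inner_le_zero hK hp).1 hinf z hz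
  have hsplit : u - z = (u - p) - (z - p) := by abel
  rw [hsplit, norm_sub_sq_real (u - p), norm_sub_rev p z]
  linarith

theorem cauchySeq_of_sq_dist_le_sub {α E : Type*} [SemilatticeSup α] [Nonempty α]
    [PseudoMetricSpace E] {p : α → E} {φ : α → ℝ} {a : α} (hφ : BddAbove (φ '' Ici a))
    (h : ∀ s t, a ≤ s → s ≤ t → dist (p s) (p t) ^ 2 ≤ φ t - φ s) : CauchySeq p := by
  rw [Metric.cauchySeq_iff']
  intro ε hε
  obtain ⟨_, ⟨N, hN, rfl⟩, hNlt⟩ := exists_lt_of_lt_csSup (nonempty_Ici.image φ)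
    (sub_lt_self (sSup (φ '' Ici a)) (pow_pos hε 2))
  refine ⟨N, fun n hn => ?_⟩
  have hφn : φ n ≤ sSup (φ '' Ici a) := le_csSup hφ ⟨n, hN.trans hn, rfl⟩
  have hsq : dist (p n) (p N) ^ 2 < ε ^ 2 := by
    rw [dist_comm]
    linarith [h N n hN hn]
  exact lt_of_pow_lt_pow_left₀ 2 hε.le hsq

section Penalty

variable {H : Type*} [NormedAddCommGroup H] [InnerProductSpace ℝ H]

/-- `‖x₀ + η • c - z‖²` up to a term independent of `z`. -/
def penalty (x₀ c : H) (η : ℝ) (z : H) : ℝ := ‖z - x₀‖ ^ 2 - 2 * η * ⟪c, z⟫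

theorem norm_add_smul_sub_sq (x₀ c z : H) (η : ℝ) :
    ‖x₀ + η • c - z‖ ^ 2 = penalty x₀ c η z + (2 * η * ⟪c, x₀⟫ + η ^ 2 * ‖c‖ ^ 2) := by
  have hsplit : x₀ + η • c - z = η • c - (z - x₀) := by abel
  rw [hsplit, norm_sub_sq_real, norm_smul, real_inner_smul_left, inner_sub_right, penalty,
    Real.norm_eq_abs, mul_pow, sq_abs]
  ring

theorem penalty_add_sq_norm_sub_le {S : Set H} (hS : Convex ℝ S) {x₀ c p : H} {η : ℝ}
    (hp : p ∈ S) (hmin : ∀ z ∈ S, ‖x₀ + η • c - p‖ ≤ ‖x₀ + η • c - z‖) {z : H} (hz : z ∈ S) :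
    penalty x₀ c η p + ‖p - z‖ ^ 2 ≤ penalty x₀ c η z := by
  have := sq_norm_sub_add_sq_norm_sub_le_of_forall_norm_sub_le hS hp hmin hz
  rw [norm_add_smul_sub_sq, norm_add_smul_sub_sq] at this
  linarith

variable {S : Set H} {x₀ c : H} {proj : ℝ → H}

theorem monotone_inner_of_penalty (hprojS : ∀ η, proj η ∈ S)
    (hpen : ∀ η, ∀ z ∈ S, penalty x₀ c η (proj η) + ‖proj η - z‖ ^ 2 ≤ penalty x₀ c η z) :
    Monotone fun η => ⟪c, proj η⟫ := by
  intro η η' h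
  rcases h.eq_or_lt with rfl | hlt
  · rfl
  have h₁ := hpen η (proj η') (hprojS η')
  have h₂ := hpen η' (proj η) (hprojS η)
  simp only [penalty] at h₁ h₂
  by_contra! hgt
  nlinarith [sq_nonneg ‖proj η - proj η'‖, sq_nonneg ‖proj η' - proj η‖]

theorem sq_dist_le_of_penalty (hprojS : ∀ η, proj η ∈ S)
    (hpen : ∀ η, ∀ z ∈ S, penalty x₀ c η (proj η) + ‖proj η - z‖ ^ 2 ≤ penalty x₀ c η z)
    {η η' : ℝ} (hη : 0 ≤ η) (h : η ≤ η') :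
    dist (proj η) (proj η') ^ 2 ≤ ‖proj η' - x₀‖ ^ 2 - ‖proj η - x₀‖ ^ 2 := by
  have hpair := hpen η (proj η') (hprojS η')
  have hinner := monotone_inner_of_penalty hprojS hpen h
  simp only [penalty] at hpair hinner
  rw [dist_eq_norm]
  nlinarith

theorem sq_norm_add_sq_norm_le_of_penalty (hprojS : ∀ η, proj η ∈ S)
    (hpen : ∀ η, ∀ z ∈ S, penalty x₀ c η (proj η) + ‖proj η - z‖ ^ 2 ≤ penalty x₀ c η z)
    {xs : H} (hxs : xs ∈ S) (hmax : ∀ z ∈ S, ⟪c, z⟫ ≤ ⟪c, xs⟫) {η : ℝ} (hη : 0 ≤ η) :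
    ‖proj η - x₀‖ ^ 2 + ‖proj η - xs‖ ^ 2 ≤ ‖xs - x₀‖ ^ 2 := by
  have hpair := hpen η xs hxs
  have := hmax (proj η) (hprojS η)
  simp only [penalty] at hpair
  nlinarith

theorem tendsto_inner_of_penalty (hprojS : ∀ η, proj η ∈ S)
    (hpen : ∀ η, ∀ z ∈ S, penalty x₀ c η (proj η) + ‖proj η - z‖ ^ 2 ≤ penalty x₀ c η z)
    {xs : H} (hxs : xs ∈ S) (hmax : ∀ z ∈ S, ⟪c, z⟫ ≤ ⟪c, xs⟫) :
    Tendsto (fun η => ⟪c, proj η⟫) atTop (nhds ⟪c, xs⟫) := by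
  have hlower : ∀ η > 0, ⟪c, xs⟫ - ‖xs - x₀‖ ^ 2 / (2 * η) ≤ ⟪c, proj η⟫ := by
    intro η hη
    have hpair := hpen η xs hxs
    simp only [penalty] at hpair
    have : ⟪c, xs⟫ - ⟪c, proj η⟫ ≤ ‖xs - x₀‖ ^ 2 / (2 * η) := by
      rw [le_div_iff₀ (by positivity)]
      nlinarith [sq_nonneg ‖proj η - x₀‖, sq_nonneg ‖proj η - xs‖]
    linarith
  have hgap : Tendsto (fun η : ℝ => ⟪c, xs⟫ - ‖xs - x₀‖ ^ 2 / (2 * η)) atTop (nhds ⟪c, xs⟫) := by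
    simpa using tendsto_const_nhds.sub
      (tendsto_const_nhds.div_atTop (tendsto_id.const_mul_atTop (two_pos : (0 : ℝ) < 2)))
  exact tendsto_of_tendsto_of_tendsto_of_le_of_le' hgap tendsto_const_nhds
    (eventually_gt_atTop 0 |>.mono hlower) (Eventually.of_forall fun η => hmax _ (hprojS η))

theorem cauchySeq_of_penalty (hprojS : ∀ η, proj η ∈ S)
    (hpen : ∀ η, ∀ z ∈ S, penalty x₀ c η (proj η) + ‖proj η - z‖ ^ 2 ≤ penalty x₀ c η z)
    {xs : H} (hxs : xs ∈ S) (hmax : ∀ z ∈ S, ⟪c, z⟫ ≤ ⟪c, xs⟫) : CauchySeq proj := by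
  refine cauchySeq_of_sq_dist_le_sub (φ := fun η => ‖proj η - x₀‖ ^ 2) (a := 0) ?_
    fun s t hs hst => sq_dist_le_of_penalty hprojS hpen hs hst
  refine ⟨‖xs - x₀‖ ^ 2, ?_⟩
  rintro _ ⟨η, hη, rfl⟩
  have := sq_norm_add_sq_norm_le_of_penalty hprojS hpen hxs hmax hη
  nlinarith [sq_nonneg ‖proj η - xs‖]

end Penalty

theorem single_projection_tendsto_general
    {H : Type*} [NormedAddCommGroup H] [InnerProductSpace ℝ H] [CompleteSpace H]
    (S : Set H) (hcl : IsClosed S) (hconv : Convex ℝ S)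
    (c x₀ : H)
    (M : Set H) (hM : M = {x ∈ S | ∀ z ∈ S, ⟪c, z⟫ ≤ ⟪c, x⟫})
    (xstar : H) (hxstarM : xstar ∈ M)
    (hxstar : ∀ y ∈ M, ‖xstar - x₀‖ ≤ ‖y - x₀‖)
    (proj : ℝ → H) (hprojS : ∀ η, proj η ∈ S)
    (hproj : ∀ η, ∀ z ∈ S, ‖x₀ + η • c - proj η‖ ≤ ‖x₀ + η • c - z‖) :
    Tendsto proj atTop (nhds xstar) := by
  subst hM
  obtain ⟨hxS, hmax⟩ := hxstarM
  have hpen : ∀ η, ∀ z ∈ S, penalty x₀ c η (proj η) + ‖proj η - z‖ ^ 2 ≤ penalty x₀ c η z :=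
    fun η _ hz => penalty_add_sq_norm_sub_le hconv (hprojS η) (hproj η) hz
  obtain ⟨y, hy⟩ := cauchySeq_tendsto_of_complete (cauchySeq_of_penalty hprojS hpen hxS hmax)
  have hyS : y ∈ S := hcl.mem_of_tendsto hy (Eventually.of_forall hprojS)
  have hcy : ⟪c, y⟫ = ⟪c, xstar⟫ := tendsto_nhds_unique
    (((continuous_const.inner continuous_id).tendsto y).comp hy)
    (tendsto_inner_of_penalty hprojS hpen hxS hmax)
  have hyM : ∀ z ∈ S, ⟪c, z⟫ ≤ ⟪c, y⟫ := hcy ▸ hmax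
  have hbound : ‖y - x₀‖ ^ 2 + ‖y - xstar‖ ^ 2 ≤ ‖xstar - x₀‖ ^ 2 :=
    le_of_tendsto
      (((by fun_prop : Continuous fun z => ‖z - x₀‖ ^ 2 + ‖z - xstar‖ ^ 2).tendsto y).comp hy)
      ((eventually_ge_atTop 0).mono fun η hη =>
        sq_norm_add_sq_norm_le_of_penalty hprojS hpen hxS hmax hη)
  have hnear : ‖xstar - x₀‖ ≤ ‖y - x₀‖ := hxstar y ⟨hyS, hyM⟩
  have hy_eq : y = xstar := by
    have : ‖y - xstar‖ = 0 := by nlinarith [norm_nonneg (y - xstar), norm_nonneg (xstar - x₀)]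
    rwa [norm_sub_eq_zero_iff] at this
  exact hy_eq ▸ hy

/-- As `η → ∞`, the projections `P_S(x₀ + η c)` converge in norm to the unique
maximizer of `⟪c, ·⟫` over `S` that is closest to `x₀`. -/
theorem single_projection_tendsto
    {H : Type*} [NormedAddCommGroup H] [InnerProductSpace ℝ H] [CompleteSpace H]
    (S : Set H) (hne : S.Nonempty) (hcl : IsClosed S) (hconv : Convex ℝ S)
    (c x₀ : H)
    (M : Set H) (hM : M = {x ∈ S | ∀ z ∈ S, ⟪c, z⟫ ≤ ⟪c, x⟫}) (hMne : M.Nonempty)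
    (xstar : H) (hxstarM : xstar ∈ M)
    (hxstar : ∀ y ∈ M, ‖xstar - x₀‖ ≤ ‖y - x₀‖)
    (proj : ℝ → H) (hprojS : ∀ η, proj η ∈ S)
    (hproj : ∀ η, ∀ z ∈ S, ‖x₀ + η • c - proj η‖ ≤ ‖x₀ + η • c - z‖) :
    Tendsto proj atTop (nhds xstar) :=
  single_projection_tendsto_general S hcl hconv c x₀ M hM xstar hxstarM hxstar proj hprojS hproj
end

section
/- Let S be a nonempty closed convex subset of a real Hilbert space H, c ∈ H, x₀ ∈ H, and η > 0. If x* is a maximizer of ⟨c, x⟩ over S closest to x₀, then ‖P_S(x₀ + η c) − x₀‖ ≤ ‖x* − x₀‖. -/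
open RealInnerProductSpace

theorem norm_sub_le_of_norm_add_smul_sub_le {H : Type*} [NormedAddCommGroup H]
    [InnerProductSpace ℝ H] {c x₀ y z : H} {η : ℝ} (hη : 0 ≤ η) (hc : ⟪c, y⟫ ≤ ⟪c, z⟫)
    (h : ‖x₀ + η • c - y‖ ≤ ‖x₀ + η • c - z‖) : ‖y - x₀‖ ≤ ‖z - x₀‖ := by
  have expand : ∀ w : H, ‖x₀ + η • c - w‖ ^ 2 =
      ‖w - x₀‖ ^ 2 - 2 * η * (⟪c, w⟫ - ⟪c, x₀⟫) + η ^ 2 * ‖c‖ ^ 2 := fun w => by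
    rw [show x₀ + η • c - w = η • c - (w - x₀) by abel, norm_sub_sq_real, norm_smul,
      real_inner_smul_left, inner_sub_right, Real.norm_of_nonneg hη]
    ring
  have hsq := pow_le_pow_left₀ (norm_nonneg _) h 2
  rw [expand, expand] at hsq
  have : ‖y - x₀‖ ^ 2 ≤ ‖z - x₀‖ ^ 2 := by nlinarith [mul_le_mul_of_nonneg_left hc hη]
  exact (pow_le_pow_iff_left₀ (norm_nonneg _) (norm_nonneg _) two_ne_zero).mp this

theorem proj_dist_le_maximizer_dist_general
    {H : Type*} [NormedAddCommGroup H] [InnerProductSpace ℝ H]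
    (S : Set H)
    (c x₀ : H) (η : ℝ) (hη : 0 < η)
    (xstar : H) (hxstarS : xstar ∈ S)
    (hxstarMax : ∀ z ∈ S, ⟪c, z⟫ ≤ ⟪c, xstar⟫)
    (xη : H) (hxηS : xη ∈ S)
    (hxη : ∀ z ∈ S, ‖x₀ + η • c - xη‖ ≤ ‖x₀ + η • c - z‖) :
    ‖xη - x₀‖ ≤ ‖xstar - x₀‖ :=
  norm_sub_le_of_norm_add_smul_sub_le hη.le (hxstarMax xη hxηS) (hxη xstar hxstarS)

/-- If `x*` is a maximizer of `⟪c,·⟫` over `S` closest to `x₀`, then for any `η > 0`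
the projection `P_S(x₀ + η c)` satisfies `‖P_S(x₀ + η c) - x₀‖ ≤ ‖x* - x₀‖`. -/
theorem proj_dist_le_maximizer_dist
    {H : Type*} [NormedAddCommGroup H] [InnerProductSpace ℝ H] [CompleteSpace H]
    (S : Set H) (hne : S.Nonempty) (hcl : IsClosed S) (hconv : Convex ℝ S)
    (c x₀ : H) (η : ℝ) (hη : 0 < η)
    (xstar : H) (hxstarS : xstar ∈ S)
    (hxstarMax : ∀ z ∈ S, ⟪c, z⟫ ≤ ⟪c, xstar⟫)
    (hxstarClosest : ∀ y ∈ S, (∀ z ∈ S, ⟪c, z⟫ ≤ ⟪c, y⟫) → ‖xstar - x₀‖ ≤ ‖y - x₀‖)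
    (xη : H) (hxηS : xη ∈ S)
    (hxη : ∀ z ∈ S, ‖x₀ + η • c - xη‖ ≤ ‖x₀ + η • c - z‖) :
    ‖xη - x₀‖ ≤ ‖xstar - x₀‖ :=
  proj_dist_le_maximizer_dist_general S c x₀ η hη xstar hxstarS hxstarMax xη hxηS hxη
end

section
/- Let f : H → ℝ be convex, S ⊆ H a nonempty bounded closed convex set, and let {x_k} ⊆ S be generated by projected subgradient ascent x_{k+1} = P_S(x_k + η_k g_k) with η_k ≥ 0 and g_k ∈ ∂f(x_k). If f is bounded above on S, then the sequence {f(x_k)} converges. -/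
/-!
Taking `z = x_k` in the variational inequality of the projection `x_{k+1} = P_S(x_k + η_k g_k)`
gives `‖x_{k+1} - x_k‖² ≤ η_k ⟪g_k, x_{k+1} - x_k⟫`, so every step moves along a direction of
nonnegative slope for the subgradient `g_k`. The subgradient inequality then makes `f (x_k)`
nondecreasing, and a nondecreasing sequence bounded above converges.
-/

open RealInnerProductSpace Filter

section

variable {H : Type*} [NormedAddCommGroup H] [InnerProductSpace ℝ H]

theorem Convex.inner_sub_le_zero_of_forall_norm_sub_le {S : Set H} (hS : Convex ℝ S) {p y : H}
    (hy : y ∈ S) (hmin : ∀ z ∈ S, ‖p - y‖ ≤ ‖p - z‖) : ∀ z ∈ S, ⟪p - y, z - y⟫ ≤ 0 := by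
  have : Nonempty S := ⟨⟨y, hy⟩⟩
  rw [← norm_eq_iInf_iff_real_inner_le_zero hS hy]
  exact le_antisymm (le_ciInf fun z => hmin z z.2)
    (ciInf_le ⟨0, by rintro _ ⟨z, rfl⟩; positivity⟩ (⟨y, hy⟩ : S))

theorem Convex.sq_norm_sub_le_mul_inner_of_projected_step {S : Set H} (hS : Convex ℝ S)
    {x y g : H} {η : ℝ} (hx : x ∈ S) (hy : y ∈ S)
    (hmin : ∀ z ∈ S, ‖x + η • g - y‖ ≤ ‖x + η • g - z‖) :
    ‖y - x‖ ^ 2 ≤ η * ⟪g, y - x⟫ := by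
  have hvi := hS.inner_sub_le_zero_of_forall_norm_sub_le hy hmin x hx
  have hexpand : ⟪x + η • g - y, x - y⟫ = ‖y - x‖ ^ 2 - η * ⟪g, y - x⟫ := by
    rw [show x + η • g - y = -(y - x) + η • g by abel, show x - y = -(y - x) by abel,
      inner_add_left, inner_neg_neg, real_inner_self_eq_norm_sq, real_inner_smul_left,
      inner_neg_right]
    ring
  linarith

theorem Convex.inner_sub_nonneg_of_projected_step {S : Set H} (hS : Convex ℝ S)
    {x y g : H} {η : ℝ} (hη : 0 ≤ η) (hx : x ∈ S) (hy : y ∈ S)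
    (hmin : ∀ z ∈ S, ‖x + η • g - y‖ ≤ ‖x + η • g - z‖) :
    0 ≤ ⟪g, y - x⟫ := by
  have key := hS.sq_norm_sub_le_mul_inner_of_projected_step hx hy hmin
  rcases hη.eq_or_lt with rfl | hpos
  · have hyx : y - x = 0 := by simpa using key
    simp [hyx]
  · exact nonneg_of_mul_nonneg_right ((sq_nonneg _).trans key) hpos

end

theorem pga_values_converge_general
    {H : Type*} [NormedAddCommGroup H] [InnerProductSpace ℝ H]
    (S : Set H) (hconv : Convex ℝ S)
    (f : H → ℝ)
    (hfb : ∃ B : ℝ, ∀ z ∈ S, f z ≤ B)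
    (x : ℕ → H) (η : ℕ → ℝ) (g : ℕ → H)
    (hx0 : x 0 ∈ S) (hη : ∀ k, 0 ≤ η k)
    (hg : ∀ k, ∀ z : H, f (x k) + ⟪g k, z - x k⟫ ≤ f z)
    (hxS : ∀ k, x (k + 1) ∈ S)
    (hproj : ∀ k, ∀ z ∈ S, ‖x k + η k • g k - x (k + 1)‖ ≤ ‖x k + η k • g k - z‖) :
    ∃ L : ℝ, Tendsto (fun k => f (x k)) atTop (nhds L) := by
  have hS : ∀ k, x k ∈ S := fun k => Nat.rec hx0 (fun n _ => hxS n) k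
  have hmono : Monotone fun k => f (x k) := monotone_nat_of_le_succ fun k => by
    have hslope := hconv.inner_sub_nonneg_of_projected_step (hη k) (hS k) (hxS k) (hproj k)
    linarith [hg k (x (k + 1))]
  obtain ⟨B, hB⟩ := hfb
  exact ⟨_, tendsto_atTop_ciSup hmono ⟨B, by rintro _ ⟨k, rfl⟩; exact hB _ (hS k)⟩⟩

/-- If `f` is convex and bounded above on the nonempty bounded closed convex set `S`,
then the values along a projected subgradient ascent sequence converge. -/
theorem pga_values_converge
    {H : Type*} [NormedAddCommGroup H] [InnerProductSpace ℝ H] [CompleteSpace H]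
    (S : Set H) (hne : S.Nonempty) (hcl : IsClosed S) (hconv : Convex ℝ S)
    (hbdd : Bornology.IsBounded S)
    (f : H → ℝ) (hf : ConvexOn ℝ Set.univ f)
    (hfb : ∃ B : ℝ, ∀ z ∈ S, f z ≤ B)
    (x : ℕ → H) (η : ℕ → ℝ) (g : ℕ → H)
    (hx0 : x 0 ∈ S) (hη : ∀ k, 0 ≤ η k)
    (hg : ∀ k, ∀ z : H, f (x k) + ⟪g k, z - x k⟫ ≤ f z)
    (hxS : ∀ k, x (k + 1) ∈ S)
    (hproj : ∀ k, ∀ z ∈ S, ‖x k + η k • g k - x (k + 1)‖ ≤ ‖x k + η k • g k - z‖) :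
    ∃ L : ℝ, Tendsto (fun k => f (x k)) atTop (nhds L) :=
  pga_values_converge_general S hconv f hfb x η g hx0 hη hg hxS hproj
end

section
/- Let f : H → ℝ be convex, S ⊆ H nonempty closed convex, and {x_k} generated by projected subgradient ascent x_{k+1} = P_S(x_k + η_k g_k) with g_k ∈ ∂f(x_k). If f is bounded above on S and limsup_k η_k < ∞ with η_k > 0, then ‖x_{k+1} − x_k‖ → 0. -/
/-!
Projecting `x_k + η_k g_k` onto `S` gives the variational inequality
`⟪x_k + η_k g_k - x_{k+1}, x_k - x_{k+1}⟫ ≤ 0`, which together with the subgradient inequality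
yields `‖x_{k+1} - x_k‖² ≤ η_k (f x_{k+1} - f x_k)`. Hence `f x_k` is nondecreasing; being bounded
above on `S`, it converges, so its increments tend to `0`, and so do the steps since `η_k` is
eventually bounded.
-/

open RealInnerProductSpace Filter Topology

theorem Convex.real_inner_sub_le_zero_of_forall_norm_sub_le
    {H : Type*} [NormedAddCommGroup H] [InnerProductSpace ℝ H] {S : Set H} (hS : Convex ℝ S)
    {u v : H} (hv : v ∈ S) (hmin : ∀ z ∈ S, ‖u - v‖ ≤ ‖u - z‖) :
    ∀ z ∈ S, ⟪u - v, z - v⟫ ≤ 0 := by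
  have : Nonempty S := ⟨⟨v, hv⟩⟩
  refine (norm_eq_iInf_iff_real_inner_le_zero hS hv).1 (le_antisymm ?_ ?_)
  · exact le_ciInf fun z => hmin z z.2
  · exact ciInf_le ⟨0, Set.forall_mem_range.2 fun z : S => norm_nonneg (u - z)⟩ ⟨v, hv⟩

theorem sq_norm_sub_le_of_projected_subgradient_step
    {H : Type*} [NormedAddCommGroup H] [InnerProductSpace ℝ H] {S : Set H} (hS : Convex ℝ S)
    {f : H → ℝ} {x x' g : H} {η : ℝ} (hη : 0 ≤ η) (hx : x ∈ S) (hx' : x' ∈ S)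
    (hg : f x + ⟪g, x' - x⟫ ≤ f x')
    (hproj : ∀ z ∈ S, ‖x + η • g - x'‖ ≤ ‖x + η • g - z‖) :
    ‖x' - x‖ ^ 2 ≤ η * (f x' - f x) := by
  have hvar : ⟪(x - x') + η • g, x - x'⟫ ≤ 0 := by
    simpa only [add_sub_right_comm] using
      hS.real_inner_sub_le_zero_of_forall_norm_sub_le hx' hproj x hx
  have hexpand : ⟪(x - x') + η • g, x - x'⟫ = ‖x' - x‖ ^ 2 - η * ⟪g, x' - x⟫ := by
    rw [inner_add_left, real_inner_smul_left, real_inner_self_eq_norm_sq, norm_sub_rev,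
      ← neg_sub x' x, inner_neg_right]
    ring
  calc ‖x' - x‖ ^ 2 ≤ η * ⟪g, x' - x⟫ := by linarith
    _ ≤ η * (f x' - f x) := mul_le_mul_of_nonneg_left (by linarith) hη

theorem Monotone.tendsto_succ_sub_zero {a : ℕ → ℝ} (ha : Monotone a)
    (hbdd : BddAbove (Set.range a)) :
    Tendsto (fun k => a (k + 1) - a k) atTop (𝓝 0) := by
  have hlim := tendsto_atTop_ciSup ha hbdd
  simpa using (hlim.comp (tendsto_add_atTop_nat 1)).sub hlim

theorem tendsto_norm_zero_of_sq_le_mul {α E : Type*} [SeminormedAddCommGroup E] {l : Filter α}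
    {d : α → E} {c e : α → ℝ} (hc : IsBoundedUnder (· ≤ ·) l c) (he : Tendsto e l (𝓝 0))
    (he0 : ∀ k, 0 ≤ e k) (hd : ∀ k, ‖d k‖ ^ 2 ≤ c k * e k) :
    Tendsto (fun k => ‖d k‖) l (𝓝 0) := by
  obtain ⟨M, hM⟩ := hc
  have hsq : Tendsto (fun k => ‖d k‖ ^ 2) l (𝓝 0) := by
    refine squeeze_zero' (.of_forall fun k => sq_nonneg _) ?_
      (by simpa using he.const_mul (max M 0))
    filter_upwards [eventually_map.mp hM] with k hk
    exact (hd k).trans (mul_le_mul_of_nonneg_right (hk.trans (le_max_left _ _)) (he0 k))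
  simpa [Real.sqrt_sq (norm_nonneg _)] using hsq.sqrt

theorem pga_steps_tendsto_zero_general
    {H : Type*} [NormedAddCommGroup H] [InnerProductSpace ℝ H]
    (S : Set H) (hconv : Convex ℝ S)
    (f : H → ℝ)
    (hfb : ∃ B : ℝ, ∀ z ∈ S, f z ≤ B)
    (x : ℕ → H) (η : ℕ → ℝ) (g : ℕ → H)
    (hx0 : x 0 ∈ S) (hηpos : ∀ k, 0 < η k)
    (hηbdd : IsBoundedUnder (· ≤ ·) atTop η)
    (hg : ∀ k, ∀ z : H, f (x k) + ⟪g k, z - x k⟫ ≤ f z)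
    (hxS : ∀ k, x (k + 1) ∈ S)
    (hproj : ∀ k, ∀ z ∈ S, ‖x k + η k • g k - x (k + 1)‖ ≤ ‖x k + η k • g k - z‖) :
    Tendsto (fun k => ‖x (k + 1) - x k‖) atTop (nhds 0) := by
  have hmem : ∀ k, x k ∈ S := fun
    | 0 => hx0
    | k + 1 => hxS k
  have hstep : ∀ k, ‖x (k + 1) - x k‖ ^ 2 ≤ η k * (f (x (k + 1)) - f (x k)) := fun k =>
    sq_norm_sub_le_of_projected_subgradient_step hconv (hηpos k).le (hmem k) (hxS k)
      (hg k _) (hproj k)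
  have hincr : ∀ k, 0 ≤ f (x (k + 1)) - f (x k) := fun k =>
    nonneg_of_mul_nonneg_right ((sq_nonneg _).trans (hstep k)) (hηpos k)
  have hmono : Monotone (f ∘ x) := monotone_nat_of_le_succ fun k => sub_nonneg.1 (hincr k)
  obtain ⟨B, hB⟩ := hfb
  have hbdd : BddAbove (Set.range (f ∘ x)) := ⟨B, by rintro _ ⟨k, rfl⟩; exact hB _ (hmem k)⟩
  exact tendsto_norm_zero_of_sq_le_mul hηbdd (hmono.tendsto_succ_sub_zero hbdd) hincr hstep

/-- With positive step sizes bounded above (limsup finite) and `f` convex bounded above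
on `S`, the projected subgradient ascent iterates satisfy `‖x_{k+1} - x_k‖ → 0`. -/
theorem pga_steps_tendsto_zero
    {H : Type*} [NormedAddCommGroup H] [InnerProductSpace ℝ H] [CompleteSpace H]
    (S : Set H) (hne : S.Nonempty) (hcl : IsClosed S) (hconv : Convex ℝ S)
    (f : H → ℝ) (hf : ConvexOn ℝ Set.univ f)
    (hfb : ∃ B : ℝ, ∀ z ∈ S, f z ≤ B)
    (x : ℕ → H) (η : ℕ → ℝ) (g : ℕ → H)
    (hx0 : x 0 ∈ S) (hηpos : ∀ k, 0 < η k)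
    (hηbdd : IsBoundedUnder (· ≤ ·) atTop η)
    (hg : ∀ k, ∀ z : H, f (x k) + ⟪g k, z - x k⟫ ≤ f z)
    (hxS : ∀ k, x (k + 1) ∈ S)
    (hproj : ∀ k, ∀ z ∈ S, ‖x k + η k • g k - x (k + 1)‖ ≤ ‖x k + η k • g k - z‖) :
    Tendsto (fun k => ‖x (k + 1) - x k‖) atTop (nhds 0) :=
  pga_steps_tendsto_zero_general S hconv f hfb x η g hx0 hηpos hηbdd hg hxS hproj
end

section
/- Let S be a nonempty closed convex subset of a real Hilbert space H, x₀ ∈ H, c ∈ H, and suppose the maximizer set M(c) of ⟨c, ·⟩ over S is nonempty. If {η_j} → ∞ and x^{η_j} = P_S(x₀ + η_j c) converges weakly to x̄ ∈ S, then x̄ ∈ M(c) and ‖x̄ − x₀‖ ≤ ‖x* − x₀‖, where x* = P_{M(c)}(x₀). -/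
open RealInnerProductSpace Filter Topology

/-!
Comparing the distances from `x₀ + η • c` to its projection `x^η` and to any maximizer `x*`
gives `2η (⟪c, x*⟫ - ⟪c, x^η⟫) ≤ ‖x* - x₀‖² - ‖x^η - x₀‖²`. The left side is nonnegative, so
`‖x^η - x₀‖ ≤ ‖x* - x₀‖`; the right side is at most `‖x* - x₀‖²`, so the objective gap is
`O(1/η)`. Both bounds pass to the weak limit, since `⟪c, ·⟫` is weakly continuous and the norm
is weakly lower semicontinuous.
-/

section InnerProductSpace

variable {H : Type*} [NormedAddCommGroup H] [InnerProductSpace ℝ H]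

theorem two_mul_mul_inner_sub_le_of_norm_sub_le {x₀ c p z : H} {t : ℝ}
    (h : ‖x₀ + t • c - p‖ ≤ ‖x₀ + t • c - z‖) :
    2 * t * (⟪c, z⟫ - ⟪c, p⟫) ≤ ‖z - x₀‖ ^ 2 - ‖p - x₀‖ ^ 2 := by
  have expand : ∀ w : H,
      ‖x₀ + t • c - w‖ ^ 2 = ‖w - x₀‖ ^ 2 - 2 * t * ⟪c, w - x₀⟫ + t ^ 2 * ‖c‖ ^ 2 := by
    intro w
    rw [show x₀ + t • c - w = t • c - (w - x₀) by abel, norm_sub_sq_real, inner_smul_left,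
      norm_smul, mul_pow, Real.norm_eq_abs, sq_abs, RCLike.conj_to_real]
    ring
  have hsq := pow_le_pow_left₀ (norm_nonneg _) h 2
  rw [expand, expand, inner_sub_right, inner_sub_right] at hsq
  linarith

theorem norm_sub_le_of_tendsto_inner {ι : Type*} {l : Filter ι} [l.NeBot] {x : ι → H}
    {a x₀ : H} {r : ℝ} (hweak : ∀ y : H, Tendsto (fun j => ⟪x j, y⟫) l (𝓝 ⟪a, y⟫))
    (hr : ∀ᶠ j in l, ‖x j - x₀‖ ≤ r) :
    ‖a - x₀‖ ≤ r := by
  have r_nonneg : 0 ≤ r := hr.exists.elim fun j hj => (norm_nonneg _).trans hj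
  have hlim : Tendsto (fun j => ⟪x j - x₀, a - x₀⟫) l (𝓝 ⟪a - x₀, a - x₀⟫) := by
    simp only [inner_sub_left]
    exact (hweak _).sub tendsto_const_nhds
  have hsq : ‖a - x₀‖ ^ 2 ≤ r * ‖a - x₀‖ := by
    rw [← real_inner_self_eq_norm_sq]
    refine le_of_tendsto hlim ?_
    filter_upwards [hr] with j hj
    exact (real_inner_le_norm _ _).trans (mul_le_mul_of_nonneg_right hj (norm_nonneg _))
  nlinarith [norm_nonneg (a - x₀)]

end InnerProductSpace

theorem le_of_tendsto_of_mul_sub_le {ι : Type*} {l : Filter ι} [l.NeBot] {f t : ι → ℝ}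
    {a b C : ℝ} (hf : Tendsto f l (𝓝 a)) (ht : Tendsto t l atTop)
    (h : ∀ᶠ j in l, t j * (b - f j) ≤ C) :
    b ≤ a := by
  have hlim : Tendsto (fun j => f j + C / t j) l (𝓝 a) := by
    simpa only [add_zero] using hf.add (tendsto_const_nhds.div_atTop ht)
  refine ge_of_tendsto hlim ?_
  filter_upwards [h, ht.eventually_gt_atTop 0] with j hj htj
  have : b - f j ≤ C / t j := by rwa [le_div_iff₀ htj, mul_comm]
  linarith

theorem weak_limit_of_projections_is_maximizer_general
    {H : Type*} [NormedAddCommGroup H] [InnerProductSpace ℝ H]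
    (S : Set H)
    (c x₀ : H)
    (M : Set H) (hM : M = {x ∈ S | ∀ z ∈ S, ⟪c, z⟫ ≤ ⟪c, x⟫})
    (xstar : H) (hxstarM : xstar ∈ M)
    (η : ℕ → ℝ) (hη : Tendsto η atTop atTop)
    (xη : ℕ → H) (hxηS : ∀ j, xη j ∈ S)
    (hxη : ∀ j, ∀ z ∈ S, ‖x₀ + η j • c - xη j‖ ≤ ‖x₀ + η j • c - z‖)
    (xbar : H) (hxbarS : xbar ∈ S)
    (hweak : ∀ y : H, Tendsto (fun j => ⟪xη j, y⟫) atTop (nhds ⟪xbar, y⟫)) :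
    xbar ∈ M ∧ ‖xbar - x₀‖ ≤ ‖xstar - x₀‖ := by
  subst hM
  obtain ⟨hxstarS, hmax⟩ := hxstarM
  have gap (j : ℕ) := two_mul_mul_inner_sub_le_of_norm_sub_le (hxη j xstar hxstarS)
  have gap_nonneg : ∀ᶠ j in atTop, 0 ≤ 2 * η j * (⟪c, xstar⟫ - ⟪c, xη j⟫) := by
    filter_upwards [hη.eventually_gt_atTop 0] with j hj
    exact mul_nonneg (by positivity) (sub_nonneg.2 (hmax _ (hxηS j)))
  have hclose : ∀ᶠ j in atTop, ‖xη j - x₀‖ ≤ ‖xstar - x₀‖ := by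
    filter_upwards [gap_nonneg] with j hj
    exact (pow_le_pow_iff_left₀ (norm_nonneg _) (norm_nonneg _) two_ne_zero).1
      (by linarith [gap j])
  have gap_le (j : ℕ) : 2 * η j * (⟪c, xstar⟫ - ⟪c, xη j⟫) ≤ ‖xstar - x₀‖ ^ 2 :=
    (gap j).trans (sub_le_self _ (sq_nonneg _))
  have hval : ⟪c, xstar⟫ ≤ ⟪c, xbar⟫ :=
    le_of_tendsto_of_mul_sub_le (by simpa only [real_inner_comm] using hweak c)
      (hη.const_mul_atTop two_pos) (Eventually.of_forall gap_le)
  exact ⟨⟨hxbarS, fun z hz => (hmax z hz).trans hval⟩,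
    norm_sub_le_of_tendsto_inner hweak hclose⟩

/-- If `η_j → ∞` and the projections `x^{η_j} = P_S(x₀ + η_j c)` converge weakly to
`x̄ ∈ S`, then `x̄` is a maximizer of `⟪c,·⟫` over `S` and `‖x̄ - x₀‖ ≤ ‖x* - x₀‖`,
where `x*` is the maximizer closest to `x₀`. -/
theorem weak_limit_of_projections_is_maximizer
    {H : Type*} [NormedAddCommGroup H] [InnerProductSpace ℝ H] [CompleteSpace H]
    (S : Set H) (hne : S.Nonempty) (hcl : IsClosed S) (hconv : Convex ℝ S)
    (c x₀ : H)
    (M : Set H) (hM : M = {x ∈ S | ∀ z ∈ S, ⟪c, z⟫ ≤ ⟪c, x⟫}) (hMne : M.Nonempty)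
    (xstar : H) (hxstarM : xstar ∈ M)
    (hxstar : ∀ y ∈ M, ‖xstar - x₀‖ ≤ ‖y - x₀‖)
    (η : ℕ → ℝ) (hη : Tendsto η atTop atTop)
    (xη : ℕ → H) (hxηS : ∀ j, xη j ∈ S)
    (hxη : ∀ j, ∀ z ∈ S, ‖x₀ + η j • c - xη j‖ ≤ ‖x₀ + η j • c - z‖)
    (xbar : H) (hxbarS : xbar ∈ S)
    (hweak : ∀ y : H, Tendsto (fun j => ⟪xη j, y⟫) atTop (nhds ⟪xbar, y⟫)) :
    xbar ∈ M ∧ ‖xbar - x₀‖ ≤ ‖xstar - x₀‖ :=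
  weak_limit_of_projections_is_maximizer_general S c x₀ M hM xstar hxstarM η hη xη hxηS hxη xbar
    hxbarS hweak
end
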